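/- Let α < 0 and let y be a solution of the second Painlevé equation y''(s) = s·y(s) + 2·y(s)³ + α that is bounded on a neighborhood of +∞. Let σ₊(s) be the unique positive real root of 2t³ + s·t + α = 0, and for s ≤ s* := −6(|α|/4)^{2/3} let σ₋(s) be the smallest real root. Then there exists s₀ ∈ ℝ such that y(s) ≥ σ₊(s) for all s ≥ s₀, and there exists s₁ ≤ s* such that σ₋(s) ≤ y(s) ≤ σ₊(s) for all s ≤ s₁. -/

import Mathlib

open MeasureTheory Filter Topology Set


/-- The Painlevé II energy of `u` over a set `I`. -/
noncomputable def EPII (α : ℝ) (u : ℝ → ℝ) (I : Set ℝ) : ℝ :=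
  ∫ s in I, ((1:ℝ)/2 * (deriv u s) ^ 2 + 1/2 * s * (u s) ^ 2 + 1/2 * (u s) ^ 4 + α * u s)

/-- A (classical) solution of the second Painlevé equation `y'' = s y + 2 y³ + α`. -/
def PainleveSol (α : ℝ) (y : ℝ → ℝ) : Prop :=
  ContDiff ℝ 2 y ∧ ∀ s : ℝ, deriv (deriv y) s = s * y s + 2 * (y s) ^ 3 + α

/-- A minimal solution of the second Painlevé equation: it minimizes `E_PII` with respect to
smooth compactly supported perturbations. -/
def MinimalSol (α : ℝ) (y : ℝ → ℝ) : Prop :=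
  PainleveSol α y ∧ ∀ φ : ℝ → ℝ, ContDiff ℝ (⊤ : ℕ∞) φ → HasCompactSupport φ →
    EPII α y (tsupport φ) ≤ EPII α (fun s => y s + φ s) (tsupport φ)

namespace PII15

lemma unpack {y : ℝ → ℝ} (h : ContDiff ℝ 2 y) :
    Differentiable ℝ y ∧ Differentiable ℝ (deriv y) ∧ Continuous (deriv (deriv y)) := by
  have h2 : ContDiff ℝ ((1:WithTop ℕ∞) + 1) y := by exact_mod_cast h
  rw [contDiff_succ_iff_deriv] at h2
  obtain ⟨hd, -, h1⟩ := h2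
  have h1' : ContDiff ℝ ((0:WithTop ℕ∞) + 1) (deriv y) := by exact_mod_cast h1
  rw [contDiff_succ_iff_deriv] at h1'
  refine ⟨hd, h1'.1, ?_⟩
  have := h1'.2.2
  exact (contDiff_zero.mp (by exact_mod_cast this))

lemma grow_linear {w : ℝ → ℝ} (hw : Differentiable ℝ w) {A ε : ℝ}
    (h : ∀ x, A ≤ x → ε ≤ deriv w x) :
    ∀ x, A ≤ x → w A + ε * (x - A) ≤ w x := by
  intro x hx
  have hdm : Differentiable ℝ (fun t => w t - ε * t) := by fun_prop
  have hm : MonotoneOn (fun t => w t - ε * t) (Ici A) := by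
    apply monotoneOn_of_deriv_nonneg (convex_Ici A) hdm.continuous.continuousOn
      hdm.differentiableOn
    intro t ht
    rw [interior_Ici] at ht
    have hce : deriv (fun t => w t - ε * t) t = deriv w t - ε := by
      have h1 : HasDerivAt (fun t : ℝ => w t - ε * t) (deriv w t - ε * 1) t :=
        ((hw t).hasDerivAt).sub ((hasDerivAt_id t).const_mul ε)
      simpa using h1.deriv
    rw [hce]
    linarith [h t ht.le]
  have := hm self_mem_Ici (mem_Ici.mpr hx) hx
  simp only at this
  nlinarith

lemma unbounded_of_lin {w : ℝ → ℝ} (hw : Differentiable ℝ w) {A ε : ℝ} (hε : 0 < ε)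
    (h : ∀ x, A ≤ x → ε ≤ deriv w x) : ∀ K B : ℝ, ∃ x, B ≤ x ∧ K ≤ w x := by
  intro K B
  obtain ⟨n, hn⟩ := exists_nat_ge ((B - A) ⊔ ((K - w A)/ε))
  have hn0 : (0:ℝ) ≤ n := n.cast_nonneg
  refine ⟨A + n, ?_, ?_⟩
  · have : B - A ≤ n := le_trans (le_max_left _ _) hn
    linarith
  · have hg := grow_linear hw h (A + n) (by linarith)
    have h2 : (K - w A)/ε ≤ n := le_trans (le_max_right _ _) hn
    rw [div_le_iff₀ hε] at h2
    nlinarith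

lemma unbounded_of_quad {w : ℝ → ℝ} (hw : Differentiable ℝ w) (hw' : Differentiable ℝ (deriv w))
    {A c : ℝ} (hc : 0 < c) (h : ∀ x, A ≤ x → c ≤ deriv (deriv w) x) :
    ∀ K B : ℝ, ∃ x, B ≤ x ∧ K ≤ w x := by
  have hlin := grow_linear hw' h
  set A' := A + (|deriv w A| + 1)/c with hA'def
  have habs : (0:ℝ) ≤ |deriv w A| + 1 := by positivity
  have hA' : A ≤ A' := by
    rw [hA'def]
    have : 0 ≤ (|deriv w A| + 1)/c := by positivity
    linarith
  have h1 : ∀ x, A' ≤ x → (1:ℝ) ≤ deriv w x := by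
    intro x hx
    have hg := hlin x (le_trans hA' hx)
    have h3 : (|deriv w A| + 1)/c ≤ x - A := by
      rw [hA'def] at hx; linarith
    rw [div_le_iff₀ hc] at h3
    nlinarith [neg_abs_le (deriv w A), hc]
  exact unbounded_of_lin hw one_pos h1
lemma stays {g : ℝ → ℝ} (hg : Differentiable ℝ g) (hg' : Differentiable ℝ (deriv g))
    (hg'' : Continuous (deriv (deriv g))) {a : ℝ} (h0 : 0 ≤ g a) (h1 : 0 ≤ deriv g a)
    (key : ∀ s, a ≤ s → 0 ≤ g s → 0 < deriv (deriv g) s) :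
    ∀ s, a ≤ s → (0 ≤ g s ∧ 0 ≤ deriv g s) := by
  have main : ∀ s, a ≤ s → 0 ≤ g s := by
    by_contra hcon
    push_neg at hcon
    obtain ⟨s', hs'a, hs'neg⟩ := hcon
    set S := {t ∈ Icc a s' | 0 ≤ g t ∧ 0 ≤ deriv g t} with hSdef
    have hSclosed : IsClosed S := by
      apply IsClosed.inter isClosed_Icc
      exact (isClosed_le continuous_const hg.continuous).inter
        (isClosed_le continuous_const hg'.continuous)
    have hScompact : IsCompact S :=
      isCompact_Icc.of_isClosed_subset hSclosed (fun t ht => ht.1)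
    have haS : a ∈ S := ⟨⟨le_refl a, hs'a⟩, h0, h1⟩
    have hSne : S.Nonempty := ⟨a, haS⟩
    set b := sSup S with hbdef
    have hbS : b ∈ S := hScompact.sSup_mem hSne
    obtain ⟨⟨hab, hbs'⟩, hgb, hgb'⟩ := hbS
    have hbne : b ≠ s' := by
      intro hh; rw [hh] at hgb; linarith
    have hblt : b < s' := lt_of_le_of_ne hbs' hbne
    -- find δ > 0 with g'' > 0 on Icc b (b+δ) and b+δ ≤ s'
    have hU : {x : ℝ | 0 < deriv (deriv g) x} ∈ nhds b := by
      apply (isOpen_lt continuous_const hg'').mem_nhds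
      exact key b hab hgb
    obtain ⟨ε, hε, hball⟩ := Metric.mem_nhds_iff.mp hU
    set δ := min (ε/2) (s' - b) with hδdef
    have hδpos : 0 < δ := lt_min (by linarith) (by linarith)
    have hsub : Icc b (b + δ) ⊆ {x : ℝ | 0 < deriv (deriv g) x} := by
      intro t ht
      apply hball
      rw [Metric.mem_ball, Real.dist_eq, abs_lt]
      have h1' := ht.1; have h2' := ht.2
      have : δ ≤ ε/2 := min_le_left _ _
      constructor <;> nlinarith
    have hd2pos : ∀ t ∈ Icc b (b + δ), 0 < deriv (deriv g) t := fun t ht => hsub ht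
    have hmono' : MonotoneOn (deriv g) (Icc b (b + δ)) := by
      apply monotoneOn_of_deriv_nonneg (convex_Icc _ _) hg'.continuous.continuousOn
        hg'.differentiableOn
      intro t ht
      rw [interior_Icc] at ht
      exact (hd2pos t ⟨ht.1.le, ht.2.le⟩).le
    have hg'nonneg : ∀ t ∈ Icc b (b + δ), 0 ≤ deriv g t := by
      intro t ht
      have := hmono' (left_mem_Icc.mpr (by linarith)) ht ht.1
      linarith
    have hmono : MonotoneOn g (Icc b (b + δ)) := by
      apply monotoneOn_of_deriv_nonneg (convex_Icc _ _) hg.continuous.continuousOn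
        hg.differentiableOn
      intro t ht
      rw [interior_Icc] at ht
      exact hg'nonneg t ⟨ht.1.le, ht.2.le⟩
    have hmem : b + δ ∈ S := by
      have hδs' : b + δ ≤ s' := by
        have : δ ≤ s' - b := min_le_right _ _
        linarith
      refine ⟨⟨by linarith, hδs'⟩, ?_, ?_⟩
      · have := hmono (left_mem_Icc.mpr (by linarith))
          (right_mem_Icc.mpr (by linarith)) (by linarith)
        linarith
      · exact hg'nonneg _ (right_mem_Icc.mpr (by linarith))
    have : b + δ ≤ b := le_csSup hScompact.bddAbove hmem
    linarith
  intro s hs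
  refine ⟨main s hs, ?_⟩
  have hmono' : MonotoneOn (deriv g) (Icc a s) := by
    apply monotoneOn_of_deriv_nonneg (convex_Icc _ _) hg'.continuous.continuousOn
      hg'.differentiableOn
    intro t ht
    rw [interior_Icc] at ht
    exact (key t ht.1.le (main t ht.1.le)).le
  have := hmono' (left_mem_Icc.mpr hs) (right_mem_Icc.mpr hs) hs
  linarith
set_option maxHeartbeats 1000000 in
lemma noblow {v : ℝ → ℝ} (hv : Differentiable ℝ v) (hv' : Differentiable ℝ (deriv v))
    {A ε K : ℝ} (hε : 0 < ε) (hK : 0 ≤ K)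
    (h1 : ∀ x, A ≤ x → 0 < v x)
    (h2 : ∀ x, A ≤ x → ε ≤ deriv v x)
    (h3 : ∀ x, A ≤ x → 2*(v x)^3 - x*(v x) - K ≤ deriv (deriv v) x) : False := by
  have hlin := grow_linear hv h2
  -- Step 1: find A₂ beyond which v'' ≥ v³ and v ≥ 1
  obtain ⟨n, hn⟩ := exists_nat_ge (max ((K+1)/ε) (max (2/ε^2) (|A|+1)))
  have hn1 : (K+1)/ε ≤ n := le_trans (le_max_left _ _) hn
  have hn2 : 2/ε^2 ≤ n := le_trans (le_trans (le_max_left _ _) (le_max_right _ _)) hn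
  have hn3 : |A|+1 ≤ n := le_trans (le_trans (le_max_right _ _) (le_max_right _ _)) hn
  have hn0 : (0:ℝ) ≤ n := n.cast_nonneg
  obtain ⟨A₂, hA2def⟩ : ∃ t : ℝ, t = A + (n:ℝ) := ⟨_, rfl⟩
  have hA2 : A ≤ A₂ := by linarith
  have hvbig : ∀ x, A₂ ≤ x → K + 1 ≤ v x ∧ (x + 1 ≤ (v x)^2) := by
    intro x hx
    have hg := hlin x (by linarith)
    have hvA := h1 A le_rfl
    have hxA : (n:ℝ) ≤ x - A := by rw [hA2def] at hx; linarith
    have hxa0 : (0:ℝ) ≤ x - A := by linarith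
    have hKv : K + 1 ≤ v x := by
      rw [div_le_iff₀ hε] at hn1
      nlinarith
    refine ⟨hKv, ?_⟩
    have hεx : ε * (x - A) ≤ v x := by nlinarith
    have h2n : 2 ≤ ε^2 * n := by
      rw [div_le_iff₀ (by positivity)] at hn2; linarith [mul_comm (ε^2) (n:ℝ)]
    have hAabs : A ≤ |A| := le_abs_self A
    have e0 : ε^2*(n:ℝ) ≤ ε^2*(x-A) := mul_le_mul_of_nonneg_left hxA (by positivity)
    have e1 : ε^2*(n:ℝ)*(x-A) ≤ ε^2*(x-A)*(x-A) := mul_le_mul_of_nonneg_right e0 hxa0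
    have e2 : 2*(x-A) ≤ ε^2*(n:ℝ)*(x-A) := mul_le_mul_of_nonneg_right h2n hxa0
    have e3 : (ε*(x-A))^2 ≤ (v x)^2 := by
      apply pow_le_pow_left₀ (mul_nonneg hε.le hxa0) hεx
    nlinarith [e1, e2, e3]
  have hcube : ∀ x, A₂ ≤ x → (v x)^3 ≤ deriv (deriv v) x ∧ (1:ℝ) ≤ v x := by
    intro x hx
    obtain ⟨hKv, hx1⟩ := hvbig x hx
    have hvpos := h1 x (by linarith)
    have h3' := h3 x (by linarith)
    constructor
    · nlinarith
    · linarith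
  -- Step 2: energy E := (v')² - v⁴/2 is monotone on [A₂, ∞)
  have hEdiff : Differentiable ℝ (fun x => (deriv v x)^2 - (v x)^4/2) :=
    (hv'.pow 2).sub ((hv.pow 4).div_const 2)
  have hEderiv : ∀ x, deriv (fun x => (deriv v x)^2 - (v x)^4/2) x
      = 2 * deriv v x * deriv (deriv v) x - (4 * (v x)^3 * deriv v x)/2 := by
    intro x
    have hdE : HasDerivAt (fun x => (deriv v x)^2 - (v x)^4/2) ((2:ℕ) * (deriv v x)^1 * deriv (deriv v) x
        - ((4:ℕ) * (v x)^3 * deriv v x)/2) x :=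
      (((hv' x).hasDerivAt.pow 2)).sub ((((hv x).hasDerivAt.pow 4)).div_const 2)
    rw [hdE.deriv]; push_cast; ring
  have hEmono : MonotoneOn (fun x => (deriv v x)^2 - (v x)^4/2) (Ici A₂) := by
    apply monotoneOn_of_deriv_nonneg (convex_Ici _) hEdiff.continuous.continuousOn
      hEdiff.differentiableOn
    intro x hx
    rw [interior_Ici] at hx
    rw [hEderiv x]
    obtain ⟨hc, hv1⟩ := hcube x hx.le
    have hd := h2 x (le_trans hA2 hx.le)
    nlinarith
  obtain ⟨C, hCdef⟩ : ∃ C : ℝ, C = (deriv v A₂)^2 - (v A₂)^4/2 := ⟨_, rfl⟩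
  -- Step 3: beyond A₃, v' ≥ v²/2
  obtain ⟨p, hp⟩ := exists_nat_ge ((1 + 4*|C|)/ε)
  have hp0 : (0:ℝ) ≤ p := p.cast_nonneg
  obtain ⟨A₃, hA3def⟩ : ∃ t : ℝ, t = A₂ + (p:ℝ) := ⟨_, rfl⟩
  have hA3 : A₂ ≤ A₃ := by linarith
  have hvC : ∀ x, A₃ ≤ x → 1 + 4*|C| ≤ v x := by
    intro x hx
    have hg := hlin x (by linarith)
    have hvA := h1 A le_rfl
    have hxp : (p:ℝ) ≤ x - A₂ := by rw [hA3def] at hx; linarith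
    rw [div_le_iff₀ hε] at hp
    nlinarith
  have hslope : ∀ x, A₃ ≤ x → (v x)^2/2 ≤ deriv v x := by
    intro x hx
    have hE : C ≤ (deriv v x)^2 - (v x)^4/2 := by
      rw [hCdef]
      exact hEmono (mem_Ici.mpr le_rfl) (mem_Ici.mpr (hA3.trans hx)) (hA3.trans hx)
    have hvc := hvC x hx
    have habs : -|C| ≤ C := neg_abs_le C
    have habs' : 0 ≤ |C| := abs_nonneg C
    have hv1 : 1 ≤ v x := by linarith
    have h4 : v x ≤ (v x)^4 := by
      have t1 : (0:ℝ) ≤ v x := by linarith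
      have t2 : (0:ℝ) ≤ v x - 1 := by linarith
      have t3 : (0:ℝ) ≤ (v x)^2 + v x + 1 := by positivity
      nlinarith [mul_nonneg (mul_nonneg t1 t2) t3]
    have hvC4 : 4*|C| ≤ (v x)^4 := by linarith
    have hE2 : (v x)^4/4 ≤ (deriv v x)^2 := by linarith
    have hdpos : 0 < deriv v x := lt_of_lt_of_le hε (h2 x (by linarith))
    nlinarith
  -- Step 4: -(1/v) grows at rate ≥ 1/2, contradiction
  have hφderiv : ∀ x, A ≤ x → HasDerivAt (fun x => -(v x)⁻¹ - x/2) (deriv v x/(v x)^2 - 1/2) x := by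
    intro x hx
    have hne : v x ≠ 0 := (h1 x hx).ne'
    have hinv : HasDerivAt (fun y => -(v y)⁻¹) (-(-(deriv v x)/(v x)^2)) x :=
      ((hv x).hasDerivAt.inv hne).neg
    have hid : HasDerivAt (fun y : ℝ => y/2) (1/2) x := by
      simpa using (hasDerivAt_id x).div_const 2
    have := hinv.sub hid
    exact this.congr_deriv (by ring)
  have hφmono : MonotoneOn (fun x => -(v x)⁻¹ - x/2) (Ici A₃) := by
    apply monotoneOn_of_deriv_nonneg (convex_Ici _)
    · intro x hx
      exact (hφderiv x (le_trans hA2 (le_trans hA3 hx))).continuousAt.continuousWithinAt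
    · intro x hx
      rw [interior_Ici] at hx
      exact ((hφderiv x (le_trans hA2 (le_trans hA3 hx.le))).differentiableAt).differentiableWithinAt
    · intro x hx
      rw [interior_Ici] at hx
      rw [(hφderiv x (le_trans hA2 (le_trans hA3 hx.le))).deriv]
      have hs := hslope x hx.le
      have hvpos := h1 x (le_trans hA2 (le_trans hA3 hx.le))
      rw [sub_nonneg, le_div_iff₀ (by positivity)]
      nlinarith
  -- evaluate at x := A₃ + 2/(v A₃) + 2
  have hvA3 := h1 A₃ (le_trans hA2 hA3)
  obtain ⟨x₀, hx₀def⟩ : ∃ t : ℝ, t = A₃ + 2*(v A₃)⁻¹ + 2 := ⟨_, rfl⟩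
  have hiA3 : 0 < (v A₃)⁻¹ := by positivity
  have hx₀ : A₃ ≤ x₀ := by rw [hx₀def]; linarith
  have hfin : -(v A₃)⁻¹ - A₃/2 ≤ -(v x₀)⁻¹ - x₀/2 := by
    have := hφmono (mem_Ici.mpr le_rfl) (mem_Ici.mpr hx₀) hx₀
    simpa using this
  have hvx₀ := h1 x₀ (le_trans hA2 (le_trans hA3 hx₀))
  have hi1 : 0 < (v x₀)⁻¹ := by positivity
  have hmul : (v A₃)⁻¹ * v A₃ = 1 := inv_mul_cancel₀ hvA3.ne'
  linarith

lemma cubic_factor {α a s : ℝ} (ha : 2*a^3 + s*a + α = 0) (t : ℝ) :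
    2*t^3 + s*t + α = (t - a)*(2*t^2 + 2*a*t + 2*a^2 + s) := by linear_combination ha

lemma twoasq_pos {α a s : ℝ} (hα : α < 0) (ha : 0 < a) (hroot : 2*a^3 + s*a + α = 0) :
    0 < 2*a^2 + s := by nlinarith

lemma K_pos {α a s : ℝ} (hα : α < 0) (ha : 0 < a) (hroot : 2*a^3 + s*a + α = 0)
    {t : ℝ} (ht : 0 ≤ t) : 0 < 2*t^2 + 2*a*t + 2*a^2 + s := by
  have h2 := twoasq_pos hα ha hroot
  nlinarith

lemma K_pos' {a s : ℝ} (ha : 0 < a) (hs : 0 ≤ s) (t : ℝ) :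
    0 < 2*t^2 + 2*a*t + 2*a^2 + s := by
  nlinarith [sq_nonneg (2*t + a), sq_nonneg a]

lemma cubic_sign {α a s t : ℝ} (hα : α < 0) (ha : 0 < a)
    (hroot : 2*a^3 + s*a + α = 0) (hts : 0 ≤ t ∨ 0 ≤ s) :
    ((2*t^3 + s*t + α < 0 ↔ t < a) ∧ (0 < 2*t^3 + s*t + α ↔ a < t)) := by
  have hK : 0 < 2*t^2 + 2*a*t + 2*a^2 + s := by
    rcases hts with h|h
    · exact K_pos hα ha hroot h
    · exact K_pos' ha h t
  have hfac := cubic_factor hroot t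
  constructor <;> constructor <;> intro hh <;> nlinarith

lemma chord_identity {α a b s t lam : ℝ} (ha : 2*a^3 + s*a + α = 0)
    (hb : 2*b^3 + t*b + α = 0) :
    a*b*(2*(lam*a+(1-lam)*b)^3 + (lam*s+(1-lam)*t)*(lam*a+(1-lam)*b) + α)
      = lam*(1-lam)*(a-b)^2*(-α - 2*a*b*(lam*a+(1-lam)*b)) := by
  have hsa : s*a = -α - 2*a^3 := by linarith
  have htb : t*b = -α - 2*b^3 := by linarith
  linear_combination (lam^2*a*b + lam*(1-lam)*b^2) * hsa
    + ((1-lam)^2*a*b + lam*(1-lam)*a^2) * htb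

lemma exists_neg_root {α s : ℝ} (hα : α < 0) (hsneg : s < 0)
    (hs6 : -α ≤ (2/3)*(-s)*Real.sqrt (-s/6)) : ∃ r, r < 0 ∧ 2*r^3 + s*r + α = 0 := by
  set T := Real.sqrt (-s/6) with hTdef
  have hT2 : T^2 = -s/6 := Real.sq_sqrt (by linarith)
  have hT0 : 0 < T := Real.sqrt_pos.mpr (by linarith)
  have hcont : ContinuousOn (fun t : ℝ => 2*t^3 + s*t + α) (Icc (-T) 0) := by fun_prop
  have hmem : (0:ℝ) ∈ Icc (2*(0:ℝ)^3 + s*0 + α) (2*(-T)^3 + s*(-T) + α) := by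
    constructor
    · simp; nlinarith
    · nlinarith [hT2, hT0]
  obtain ⟨r, hr, hr0⟩ := intermediate_value_Icc' (by linarith : -T ≤ (0:ℝ)) hcont hmem
  refine ⟨r, ?_, hr0⟩
  rcases lt_or_eq_of_le hr.2 with h|h
  · exact h
  · exfalso; rw [h] at hr0; simp at hr0; linarith
lemma last_point {f g : ℝ → ℝ} {lo hi : ℝ} (hlo : lo ≤ hi) (hf : ContinuousOn f (Icc lo hi))
    (hg : ContinuousOn g (Icc lo hi)) (hmem : f lo ≤ g lo) :
    ∃ c ∈ Icc lo hi, f c ≤ g c ∧ ∀ t, c < t → t ≤ hi → g t < f t := by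
  set S := Icc lo hi ∩ (fun t => g t - f t) ⁻¹' (Ici 0) with hSdef
  have hScl : IsClosed S :=
    ContinuousOn.preimage_isClosed_of_isClosed (hg.sub hf) isClosed_Icc isClosed_Ici
  have hScpt : IsCompact S := isCompact_Icc.of_isClosed_subset hScl inter_subset_left
  have hSne : S.Nonempty := ⟨lo, ⟨left_mem_Icc.mpr hlo, by simp; linarith⟩⟩
  have hcS := hScpt.sSup_mem hSne
  refine ⟨sSup S, hcS.1, by have := hcS.2; simp at this; linarith, ?_⟩
  intro t hct hthi
  by_contra hcon
  push_neg at hcon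
  have htS : t ∈ S := ⟨⟨le_trans hcS.1.1 hct.le, hthi⟩, by simp; linarith⟩
  have := le_csSup hScpt.bddAbove htS
  linarith

lemma first_point {f g : ℝ → ℝ} {lo hi : ℝ} (hlo : lo ≤ hi) (hf : ContinuousOn f (Icc lo hi))
    (hg : ContinuousOn g (Icc lo hi)) (hmem : f hi ≤ g hi) :
    ∃ d ∈ Icc lo hi, f d ≤ g d ∧ ∀ t, lo ≤ t → t < d → g t < f t := by
  set S := Icc lo hi ∩ (fun t => g t - f t) ⁻¹' (Ici 0) with hSdef
  have hScl : IsClosed S :=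
    ContinuousOn.preimage_isClosed_of_isClosed (hg.sub hf) isClosed_Icc isClosed_Ici
  have hScpt : IsCompact S := isCompact_Icc.of_isClosed_subset hScl inter_subset_left
  have hSne : S.Nonempty := ⟨hi, ⟨right_mem_Icc.mpr hlo, by simp; linarith⟩⟩
  have hcS := hScpt.sInf_mem hSne
  refine ⟨sInf S, hcS.1, by have := hcS.2; simp at this; linarith, ?_⟩
  intro t htlo htd
  by_contra hcon
  push_neg at hcon
  have htS : t ∈ S := ⟨⟨htlo, le_trans htd.le hcS.1.2⟩, by simp; linarith⟩
  have := csInf_le hScpt.bddBelow htS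
  linarith

lemma combo_exists {c d x : ℝ} (h1 : c ≤ x) (h2 : x ≤ d) (hcd : c < d) :
    ∃ lam mu : ℝ, 0 ≤ lam ∧ 0 ≤ mu ∧ lam + mu = 1 ∧ x = lam*c + mu*d := by
  have hne : d - c ≠ 0 := by linarith
  have hdc : 0 < d - c := by linarith
  refine ⟨(d-x)/(d-c), (x-c)/(d-c), div_nonneg (by linarith) hdc.le,
    div_nonneg (by linarith) hdc.le, ?_, ?_⟩
  · field_simp; ring
  · field_simp; ring
end PII15

set_option maxHeartbeats 2000000 in
open PII15 in
/-- A solution of Painlevé II (`α < 0`) bounded near `+∞` lies above `σ₊` near `+∞` and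
between `σ₋` and `σ₊` near `-∞`. -/
theorem stmt15 (α : ℝ) (hα : α < 0) (y : ℝ → ℝ) (hy : PainleveSol α y)
    (hbdd : ∃ m M : ℝ, ∀ s : ℝ, m ≤ s → |y s| ≤ M)
    (σp : ℝ → ℝ)
    (hσp : ∀ s : ℝ, 0 < σp s ∧ 2 * (σp s) ^ 3 + s * σp s + α = 0)
    (sStar : ℝ) (hsStar : sStar = -6 * (|α| / 4) ^ ((2:ℝ)/3))
    (σm : ℝ → ℝ)
    (hσm : ∀ s : ℝ, s ≤ sStar → 2 * (σm s) ^ 3 + s * σm s + α = 0 ∧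
      ∀ r : ℝ, 2 * r ^ 3 + s * r + α = 0 → σm s ≤ r) :
    (∃ s₀ : ℝ, ∀ s : ℝ, s₀ ≤ s → σp s ≤ y s) ∧
    (∃ s₁ : ℝ, s₁ ≤ sStar ∧ ∀ s : ℝ, s ≤ s₁ → σm s ≤ y s ∧ y s ≤ σp s) := by
  obtain ⟨m, M, hM⟩ := hbdd
  obtain ⟨hyC2, hode⟩ := hy
  obtain ⟨hdy, hdy', hcy''⟩ := unpack hyC2
  have hσpos : ∀ s, 0 < σp s := fun s => (hσp s).1
  have hσroot : ∀ s, 2*(σp s)^3 + s*(σp s) + α = 0 := fun s => by linear_combination (hσp s).2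
  have hyd2 : ∀ s, deriv (deriv y) s = 2*(y s)^3 + s*(y s) + α := fun s => by rw [hode s]; ring
  have hσdec : ∀ s t : ℝ, s < t → σp t < σp s := by
    intro s t hst
    have h1 := hσroot s; have h2 := hσroot t
    have hps := hσpos s; have hpt := hσpos t
    have hval : 0 < 2*(σp s)^3 + t*(σp s) + α := by nlinarith
    exact ((cubic_sign hα hpt h2 (Or.inl hps.le)).2).mp hval
  have hσmono : ∀ s t : ℝ, s ≤ t → σp t ≤ σp s := by
    intro s t h
    rcases eq_or_lt_of_le h with h|h
    · rw [h]
    · exact (hσdec s t h).le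
  -- U1 : above σp forces negative slope
  have U1 : ∀ a : ℝ, σp a < y a → deriv y a < 0 := by
    intro a hya
    by_contra hcon; push_neg at hcon
    have hgd : deriv (fun s => y s - y a) = deriv y := by
      funext s; exact deriv_sub_const _
    have key : ∀ s, a ≤ s → 0 ≤ (fun s => y s - y a) s →
        0 < deriv (deriv (fun s => y s - y a)) s := by
      intro s hs hg
      rw [hgd, hyd2 s]
      simp only [sub_nonneg] at hg
      have h1 : σp s < y s := lt_of_le_of_lt (hσmono a s hs) (lt_of_lt_of_le hya hg)
      exact ((cubic_sign hα (hσpos s) (hσroot s)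
        (Or.inl ((hσpos s).le.trans h1.le))).2).mpr h1
    have hstay := stays (hdy.sub_const _) (by rw [hgd]; exact hdy')
      (by rw [hgd]; exact hcy'') (by simp) (by rw [hgd]; exact hcon) key
    have hstay' : ∀ s, a ≤ s → y a ≤ y s := by
      intro s hs
      have := (hstay s hs).1
      simp only [sub_nonneg] at this
      exact this
    have hδpos : 0 < y a - σp a := by linarith
    have hqd : ∀ s, max a 1 ≤ s → y a - σp a ≤ deriv (deriv y) s := by
      intro s hs
      have hs1 : (1:ℝ) ≤ s := le_trans (le_max_right _ _) hs
      have hsa : a ≤ s := le_trans (le_max_left _ _) hs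
      have hys := hstay' s hsa
      have hfac := cubic_factor (hσroot s) (y s)
      rw [hyd2 s, hfac]
      have hσs := hσpos s
      have hσm' := hσmono a s hsa
      have hy0 : 0 < y s := by linarith
      have hgap : y a - σp a ≤ y s - σp s := by linarith
      have hK : 1 ≤ 2*(y s)^2 + 2*(σp s)*(y s) + 2*(σp s)^2 + s := by nlinarith
      nlinarith [mul_le_mul hgap hK (by norm_num) (by linarith)]
    obtain ⟨x, hxm, hxM⟩ := unbounded_of_quad hdy hdy' hδpos hqd (M+1) m
    have := abs_le.mp (hM x hxm)
    linarith
  -- LB : cannot stay below σp on a right tail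
  have LB : ∀ a : ℝ, max m 0 + 1 ≤ a → ¬(∀ s, a ≤ s → y s < σp s) := by
    intro a ha hall
    have ham : m ≤ a := by have := le_max_left m 0; linarith
    have ha0 : (0:ℝ) < a := by have := le_max_right m 0; linarith
    have hd2 : ∀ s, a ≤ s → deriv (deriv y) s < 0 := by
      intro s hs
      rw [hyd2 s]
      exact (cubic_sign hα (hσpos s) (hσroot s) (Or.inr (by linarith))).1.mpr (hall s hs)
    have step1 : ∀ c, a ≤ c → 0 ≤ deriv y c := by
      intro c hc
      by_contra hcon; push_neg at hcon
      have hant : AntitoneOn (deriv y) (Ici c) := by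
        apply antitoneOn_of_deriv_nonpos (convex_Ici c) hdy'.continuous.continuousOn
          hdy'.differentiableOn
        intro x hx
        rw [interior_Ici] at hx
        exact (hd2 x (le_trans hc hx.le)).le
      have hlin : ∀ x, c ≤ x → -(deriv y c) ≤ deriv (fun s => -(y s)) x := by
        intro x hx
        have he : deriv (fun s => -(y s)) x = -(deriv y x) := deriv.neg
        rw [he]
        have := hant self_mem_Ici (mem_Ici.mpr hx) hx
        linarith
      obtain ⟨x, hxm, hxM⟩ := unbounded_of_lin hdy.neg
        (by linarith : (0:ℝ) < -(deriv y c)) hlin (M+1) m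
      have := abs_le.mp (hM x hxm)
      linarith [show (-y) x = -(y x) from rfl]
    have step2 : ∀ s, a ≤ s → y s ≤ 0 := by
      intro s hs
      by_contra hcon; push_neg at hcon
      have hmono : MonotoneOn y (Ici a) := by
        apply monotoneOn_of_deriv_nonneg (convex_Ici a) hdy.continuous.continuousOn
          hdy.differentiableOn
        intro x hx
        rw [interior_Ici] at hx
        exact step1 x hx.le
      obtain ⟨T, hTdef⟩ : ∃ T : ℝ, T = max s ((-α)/(y s)) + 1 := ⟨_, rfl⟩
      have hts : s ≤ T := by rw [hTdef]; have := le_max_left s ((-α)/(y s)); linarith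
      have hyt : y s ≤ y T :=
        hmono (mem_Ici.mpr hs) (mem_Ici.mpr (le_trans hs hts)) hts
      have htpos : 0 < T := by linarith [le_trans hs hts]
      have hσt : σp T * T ≤ -α := by
        have hc3 : 0 < σp T * σp T * σp T :=
          mul_pos (mul_pos (hσpos T) (hσpos T)) (hσpos T)
        nlinarith [hσroot T]
      have ht2 : (-α)/(y s) < T := by
        rw [hTdef]; have := le_max_right s ((-α)/(y s)); linarith
      have ht3 : -α < T * y s := by rw [div_lt_iff₀ hcon] at ht2; linarith
      have hfin : σp T < y T := by nlinarith [hσpos T]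
      exact absurd (hall _ (le_trans hs hts)) (not_lt.mpr hfin.le)
    have hd2a : ∀ s, a ≤ s → -α ≤ deriv (deriv (fun u => -(y u))) s := by
      intro s hs
      have e1 : deriv (fun u => -(y u)) = fun u => -(deriv y u) := funext fun u => deriv.neg
      rw [e1]
      have e2 : deriv (fun u => -(deriv y u)) s = -(deriv (deriv y) s) := deriv.neg
      rw [e2, hyd2 s]
      have h0 := step2 s hs
      have hs0 : 0 < s := lt_of_lt_of_le ha0 hs
      have hy3 : (y s)^3 ≤ 0 := by nlinarith [sq_nonneg (y s)]
      have hsy : s * y s ≤ 0 := mul_nonpos_of_nonneg_of_nonpos hs0.le h0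
      linarith
    have hdneg : Differentiable ℝ (deriv (fun u => -(y u))) := by
      have e1 : deriv (fun u => -(y u)) = fun u => -(deriv y u) := funext fun u => deriv.neg
      rw [e1]; exact hdy'.neg
    obtain ⟨x, hxm, hxM⟩ := unbounded_of_quad hdy.neg hdneg
      (by linarith : (0:ℝ) < -α) hd2a (M+1) m
    have := abs_le.mp (hM x hxm)
    linarith [show (-y) x = -(y x) from rfl]
  -- convexity of σp on [0,∞)
  have hconv : ConvexOn ℝ (Ici 0) σp := by
    refine ⟨convex_Ici 0, ?_⟩
    intro s hs t ht lam mu hl hm hlm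
    simp only [smul_eq_mul]
    have hs0 : (0:ℝ) ≤ s := hs
    have ht0 : (0:ℝ) ≤ t := ht
    have hmu : mu = 1 - lam := by linarith
    subst hmu
    have ha := hσpos s; have hb := hσpos t
    have hra := hσroot s; have hrb := hσroot t
    have hm' : (0:ℝ) ≤ 1 - lam := hm
    have hid := chord_identity (lam := lam) hra hrb
    have hp0 : 0 < lam*(σp s) + (1-lam)*(σp t) := by
      rcases le_or_gt lam (1/2) with h|h
      · nlinarith [mul_nonneg hl ha.le]
      · nlinarith [mul_nonneg hm' hb.le]
    have ha3 : 2*(σp s)^3 ≤ -α := by nlinarith [mul_nonneg hs0 ha.le]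
    have hb3 : 2*(σp t)^3 ≤ -α := by nlinarith [mul_nonneg ht0 hb.le]
    have ha2b : (σp s)^2*(σp t) ≤ -α/2 := by
      nlinarith [mul_nonneg (sq_nonneg (σp s - σp t)) (by linarith : (0:ℝ) ≤ 2*(σp s) + σp t)]
    have hab2 : (σp s)*(σp t)^2 ≤ -α/2 := by
      nlinarith [mul_nonneg (sq_nonneg (σp t - σp s)) (by linarith : (0:ℝ) ≤ 2*(σp t) + σp s)]
    have habp : 0 ≤ -α - 2*(σp s)*(σp t)*(lam*(σp s)+(1-lam)*(σp t)) := by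
      nlinarith [mul_le_mul_of_nonneg_left ha2b hl, mul_le_mul_of_nonneg_left hab2 hm']
    have hrhs : 0 ≤ lam*(1-lam)*(σp s - σp t)^2 *
        (-α - 2*(σp s)*(σp t)*(lam*(σp s)+(1-lam)*(σp t))) :=
      mul_nonneg (mul_nonneg (mul_nonneg hl hm') (sq_nonneg _)) habp
    have hfu : 0 ≤ 2*(lam*(σp s)+(1-lam)*(σp t))^3
        + (lam*s+(1-lam)*t)*(lam*(σp s)+(1-lam)*(σp t)) + α := by
      have hab : 0 < σp s * σp t := mul_pos ha hb
      have h1 : 0 ≤ σp s * σp t * (2*(lam*(σp s)+(1-lam)*(σp t))^3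
          + (lam*s+(1-lam)*t)*(lam*(σp s)+(1-lam)*(σp t)) + α) := by
        rw [hid]; exact hrhs
      by_contra hconf; push_neg at hconf
      have hneg := mul_neg_of_pos_of_neg hab hconf
      linarith [h1, hneg]
    by_contra hcon; push_neg at hcon
    have := (cubic_sign hα (hσpos (lam*s+(1-lam)*t)) (hσroot (lam*s+(1-lam)*t))
      (Or.inl hp0.le)).1.mpr hcon
    linarith
  -- PART 1
  have part1 : ∃ s₀ : ℝ, ∀ s : ℝ, s₀ ≤ s → σp s ≤ y s := by
    by_contra hcon; push_neg at hcon
    obtain ⟨a₁, ha₁, hva₁⟩ := hcon (max m 0 + 1)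
    have h1 := LB a₁ ha₁
    push_neg at h1
    obtain ⟨b₁, hb₁, hvb₁⟩ := h1
    obtain ⟨a₂, ha₂, hva₂⟩ := hcon (b₁ + 1)
    have h2 := LB a₂ (by linarith [le_trans ha₁ hb₁])
    push_neg at h2
    obtain ⟨b₂, hb₂, hvb₂⟩ := h2
    have hb₁a₂ : b₁ < a₂ := by linarith
    have ha₂b₂ : a₂ < b₂ := lt_of_le_of_ne hb₂ (fun h => by rw [h] at hva₂; linarith)
    have hpos : (0:ℝ) < b₁ := by have := le_max_right m 0; linarith
    have hσcont : ContinuousOn σp (Ioi (0:ℝ)) :=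
      (hconv.subset (fun x hx => le_of_lt hx) (convex_Ioi 0)).continuousOn isOpen_Ioi
    obtain ⟨c, hcmem, hcle, hcprop⟩ := last_point (f := σp) (g := y) hb₁a₂.le
      (hσcont.mono (fun x hx => lt_of_lt_of_le hpos hx.1))
      hdy.continuous.continuousOn hvb₁
    obtain ⟨d, hdmem, hdle, hdprop⟩ := first_point (f := σp) (g := y) ha₂b₂.le
      (hσcont.mono (fun x hx => lt_of_lt_of_le (lt_of_lt_of_le hpos hb₁a₂.le) hx.1))
      hdy.continuous.continuousOn hvb₂
    have hcd : c < a₂ := lt_of_le_of_ne hcmem.2 (fun h => by rw [h] at hcle; linarith)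
    have hda : a₂ < d := lt_of_le_of_ne hdmem.1 (fun h => by rw [← h] at hdle; linarith)
    have hmid : ∀ t, c < t → t < d → y t < σp t := by
      intro t h1' h2'
      rcases le_or_gt t a₂ with h|h
      · exact hcprop t h1' h
      · exact hdprop t h.le h2'
    have hc0 : (0:ℝ) < c := lt_of_lt_of_le hpos hcmem.1
    have hyconc : ConcaveOn ℝ (Icc c d) y := by
      apply concaveOn_of_deriv2_nonpos (convex_Icc c d) hdy.continuous.continuousOn
        hdy.differentiableOn hdy'.differentiableOn
      intro x hx
      rw [interior_Icc] at hx
      have hiter : deriv^[2] y x = deriv (deriv y) x := rfl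
      rw [hiter, hyd2 x]
      have hx0 : (0:ℝ) ≤ x := by linarith [hx.1]
      exact ((cubic_sign hα (hσpos x) (hσroot x) (Or.inr hx0)).1.mpr (hmid x hx.1 hx.2)).le
    obtain ⟨lam, mu, hl0, hm0, hlm, hxeq⟩ := combo_exists hcd.le hda.le (lt_trans hcd hda)
    have hychord := hyconc.2 (left_mem_Icc.mpr (lt_trans hcd hda).le)
      (right_mem_Icc.mpr (lt_trans hcd hda).le) hl0 hm0 hlm
    have hσchord := hconv.2 (mem_Ici.mpr hc0.le)
      (mem_Ici.mpr (by linarith : (0:ℝ) ≤ d)) hl0 hm0 hlm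
    simp only [smul_eq_mul] at hychord hσchord
    rw [← hxeq] at hychord hσchord
    have h5 : lam*(σp c) + mu*(σp d) ≤ lam*(y c) + mu*(y d) :=
      add_le_add (mul_le_mul_of_nonneg_left hcle hl0) (mul_le_mul_of_nonneg_left hdle hm0)
    linarith
  refine ⟨part1, ?_⟩
  -- ===== PART 2 =====
  have hαabs : |α| = -α := abs_of_neg hα
  obtain ⟨q, hqdef⟩ : ∃ q : ℝ, q = (|α|/4) ^ ((2:ℝ)/3) := ⟨_, rfl⟩
  have hα40 : (0:ℝ) < |α|/4 := by rw [hαabs]; linarith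
  have hq0 : 0 < q := by rw [hqdef]; exact Real.rpow_pos_of_pos hα40 _
  have hsStar' : sStar = -6*q := by rw [hsStar, hqdef]
  have hq3 : q^3 = (|α|/4)^2 := by
    rw [hqdef, ← Real.rpow_natCast ((|α|/4) ^ ((2:ℝ)/3)) 3, ← Real.rpow_mul hα40.le]
    norm_num
  obtain ⟨r, hrdef⟩ : ∃ r : ℝ, r = Real.sqrt q := ⟨_, rfl⟩
  have hr0 : 0 < r := by rw [hrdef]; exact Real.sqrt_pos.mpr hq0
  have hr2 : r^2 = q := by rw [hrdef]; exact Real.sq_sqrt hq0.le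
  have hα4r : -α = 4*r^3 := by
    have hpos3 : 0 < r^3 := by positivity
    have heq : (r^3)^2 = (|α|/4)^2 := by
      have h7 : (r^2)^3 = q^3 := by rw [hr2]
      nlinarith [h7, hq3]
    have hle : r^3 ≤ |α|/4 := by nlinarith
    have hge : |α|/4 ≤ r^3 := by nlinarith
    rw [hαabs] at hle hge; linarith
  have hsStarneg : sStar < 0 := by rw [hsStar']; linarith
  have hspb : ∀ s, s ≤ sStar → 3*q < (σp s)^2 := by
    intro s hs
    have h2 := twoasq_pos hα (hσpos s) (hσroot s)
    rw [hsStar'] at hs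
    nlinarith
  -- concavity of σp on (−∞, sStar]
  have hconc : ConcaveOn ℝ (Iic sStar) σp := by
    refine ⟨convex_Iic _, ?_⟩
    intro s hs t ht lam mu hl hm hlm
    simp only [smul_eq_mul]
    have hmu : mu = 1 - lam := by linarith
    subst hmu
    have hm' : (0:ℝ) ≤ 1 - lam := hm
    have ha := hσpos s; have hb := hσpos t
    have hid := chord_identity (lam := lam) (hσroot s) (hσroot t)
    obtain ⟨r', hr'def⟩ : ∃ r', r' = Real.sqrt (3*q) := ⟨_, rfl⟩
    have hr'0 : 0 < r' := by rw [hr'def]; exact Real.sqrt_pos.mpr (by linarith)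
    have hr'2 : r'^2 = 3*q := by rw [hr'def]; exact Real.sq_sqrt (by linarith)
    have har' : r' ≤ σp s := by nlinarith [hspb s hs]
    have hbr' : r' ≤ σp t := by nlinarith [hspb t ht]
    have hrr' : r ≤ r' := by nlinarith
    have hp' : r' ≤ lam*(σp s)+(1-lam)*(σp t) := by
      nlinarith [mul_le_mul_of_nonneg_left har' hl, mul_le_mul_of_nonneg_left hbr' hm']
    have hp0 : 0 < lam*(σp s)+(1-lam)*(σp t) := lt_of_lt_of_le hr'0 hp'
    have hab : r'*r' ≤ (σp s)*(σp t) := mul_le_mul har' hbr' hr'0.le ha.le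
    have habp : r'*r'*r' ≤ (σp s)*(σp t)*(lam*(σp s)+(1-lam)*(σp t)) :=
      mul_le_mul hab hp' hr'0.le (mul_nonneg ha.le hb.le)
    have hkey : -α - 2*(σp s)*(σp t)*(lam*(σp s)+(1-lam)*(σp t)) ≤ 0 := by
      nlinarith [habp, hrr', hr0]
    have hrhs : lam*(1-lam)*(σp s - σp t)^2 *
        (-α - 2*(σp s)*(σp t)*(lam*(σp s)+(1-lam)*(σp t))) ≤ 0 :=
      mul_nonpos_of_nonneg_of_nonpos
        (mul_nonneg (mul_nonneg hl hm') (sq_nonneg _)) hkey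
    have hfu : 2*(lam*(σp s)+(1-lam)*(σp t))^3
        + (lam*s+(1-lam)*t)*(lam*(σp s)+(1-lam)*(σp t)) + α ≤ 0 := by
      have habpos : 0 < σp s * σp t := mul_pos ha hb
      have h1 : σp s * σp t * (2*(lam*(σp s)+(1-lam)*(σp t))^3
          + (lam*s+(1-lam)*t)*(lam*(σp s)+(1-lam)*(σp t)) + α) ≤ 0 := by
        rw [hid]; exact hrhs
      by_contra hconf; push_neg at hconf
      have hneg := mul_pos habpos hconf
      linarith [h1, hneg]
    by_contra hcon; push_neg at hcon
    have := (cubic_sign hα (hσpos (lam*s+(1-lam)*t)) (hσroot (lam*s+(1-lam)*t))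
      (Or.inl hp0.le)).2.mpr hcon
    linarith
  -- σm basics
  have hσmroot : ∀ s, s ≤ sStar → 2*(σm s)^3 + s*(σm s) + α = 0 :=
    fun s hs => by linear_combination (hσm s hs).1
  have hσmneg : ∀ s, s ≤ sStar → σm s < 0 := by
    intro s hs
    have hsneg : s < 0 := lt_of_le_of_lt hs hsStarneg
    have hs6q : 6*q ≤ -s := by rw [hsStar'] at hs; linarith
    have hsqrt : r ≤ Real.sqrt (-s/6) := by
      rw [hrdef]; apply Real.sqrt_le_sqrt; linarith
    have hs6 : -α ≤ (2/3)*(-s)*Real.sqrt (-s/6) := by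
      have h2 : (6*q)*r ≤ (-s)*Real.sqrt (-s/6) :=
        mul_le_mul (by linarith) hsqrt hr0.le (by linarith)
      nlinarith [h2]
    obtain ⟨rt, hrt0, hrtroot⟩ := exists_neg_root hα hsneg hs6
    exact lt_of_le_of_lt ((hσm s hs).2 rt hrtroot) hrt0
  -- factorization with all three roots
  have hfact : ∀ s, s ≤ sStar → ∀ t, 2*t^3+s*t+α
      = 2*(t - σm s)*(t - σp s)*(t + σm s + σp s) := by
    intro s hs t
    have h1 := hσmroot s hs; have h2 := hσroot s
    have hne : σm s - σp s ≠ 0 := ne_of_lt (by linarith [hσmneg s hs, hσpos s])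
    have hd : (σm s - σp s)*(2*((σm s)^2 + σm s*σp s + (σp s)^2) + s) = 0 := by
      linear_combination h1 - h2
    have hsum' : 2*((σm s)^2 + σm s*σp s + (σp s)^2) + s = 0 :=
      (mul_eq_zero.mp hd).resolve_left hne
    linear_combination (t - σp s) * hsum' + h2
  have hbelow : ∀ s, s ≤ sStar → ∀ t, t < σm s → 2*t^3 + s*t + α < 0 := by
    intro s hs t ht
    have hθ : σm s ≤ -(σm s) - σp s := by
      apply (hσm s hs).2
      rw [hfact s hs (-(σm s) - σp s)]; ring
    have h1 : σm s ≤ σp s := (hσm s hs).2 _ ((hσp s).2)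
    rw [hfact s hs t]
    have u1 : 0 < σm s - t := by linarith
    have u2 : 0 < σp s - t := by linarith
    have u3 : 0 < -(t + σm s + σp s) := by linarith
    nlinarith [mul_pos (mul_pos u1 u2) u3]
  -- convexity of σm on (−∞, sStar]
  have hmconv : ConvexOn ℝ (Iic sStar) σm := by
    refine ⟨convex_Iic _, ?_⟩
    intro s hs t ht lam mu hl hm0' hlm
    simp only [smul_eq_mul]
    have hmu : mu = 1 - lam := by linarith
    subst hmu
    have hm' : (0:ℝ) ≤ 1 - lam := hm0'
    have ha := hσmneg s hs; have hb := hσmneg t ht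
    have hid := chord_identity (lam := lam) (hσmroot s hs) (hσmroot t ht)
    have hp0 : lam*(σm s)+(1-lam)*(σm t) < 0 := by
      rcases le_or_gt lam (1/2) with h|h
      · nlinarith [mul_nonpos_of_nonneg_of_nonpos hl ha.le]
      · nlinarith [mul_nonpos_of_nonneg_of_nonpos hm' hb.le]
    have hab : 0 < (σm s)*(σm t) := mul_pos_of_neg_of_neg ha hb
    have hkey : 0 ≤ -α - 2*(σm s)*(σm t)*(lam*(σm s)+(1-lam)*(σm t)) := by
      nlinarith [mul_pos hab (neg_pos.mpr hp0)]
    have hrhs : 0 ≤ lam*(1-lam)*(σm s - σm t)^2 *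
        (-α - 2*(σm s)*(σm t)*(lam*(σm s)+(1-lam)*(σm t))) :=
      mul_nonneg (mul_nonneg (mul_nonneg hl hm') (sq_nonneg _)) hkey
    have hfu : 0 ≤ 2*(lam*(σm s)+(1-lam)*(σm t))^3
        + (lam*s+(1-lam)*t)*(lam*(σm s)+(1-lam)*(σm t)) + α := by
      have h1 : 0 ≤ σm s * σm t * (2*(lam*(σm s)+(1-lam)*(σm t))^3
          + (lam*s+(1-lam)*t)*(lam*(σm s)+(1-lam)*(σm t)) + α) := by
        rw [hid]; exact hrhs
      by_contra hconf; push_neg at hconf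
      have hneg := mul_neg_of_pos_of_neg hab hconf
      linarith [h1, hneg]
    have hu : lam*s+(1-lam)*t ≤ sStar := by
      nlinarith [mul_le_mul_of_nonneg_left hs hl, mul_le_mul_of_nonneg_left ht hm']
    by_contra hcon; push_neg at hcon
    have := hbelow _ hu _ hcon
    linarith
  -- L1m : below σm forces positive slope
  have L1m : ∀ a, a ≤ sStar → y a < σm a → 0 < deriv y a := by
    intro a ha hya
    by_contra hcon; push_neg at hcon
    have hgd : deriv (fun s => y a - y s) = fun s => -(deriv y s) := by
      funext s; rw [deriv_const_sub]
    have hgd2 : deriv (fun s : ℝ => -(deriv y s)) = fun s => -(deriv (deriv y) s) :=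
      funext fun s => deriv.neg
    have hmaneg : σm a < 0 := hσmneg a ha
    have key : ∀ s, a ≤ s → 0 ≤ (fun s => y a - y s) s →
        0 < deriv (deriv (fun s => y a - y s)) s := by
      intro s hs hg
      rw [hgd, hgd2]
      simp only [sub_nonneg] at hg
      have hfa : 2*(y s)^3 + a*(y s) + α < 0 := hbelow a ha (y s) (by linarith)
      have hneg : y s < 0 := by linarith
      have hcomp : 2*(y s)^3 + s*(y s) + α ≤ 2*(y s)^3 + a*(y s) + α := by nlinarith
      simp only [neg_pos]
      rw [hyd2 s]; linarith
    have hstay := stays (g := fun s => y a - y s) ((differentiable_const _).sub hdy)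
      (by rw [hgd]; exact hdy'.neg) (by rw [hgd, hgd2]; exact hcy''.neg)
      (by simp) (by rw [hgd]; simpa using hcon) key
    have hd2 : ∀ s, a ≤ s → deriv (deriv y) s < 0 := by
      intro s hs
      have h1 := (hstay s hs).1
      simp only [sub_nonneg] at h1
      rw [hyd2 s]
      have hfa : 2*(y s)^3 + a*(y s) + α < 0 := hbelow a ha (y s) (by linarith)
      have hneg : y s < 0 := by linarith
      nlinarith
    have hstr : StrictAntiOn (deriv y) (Ici a) := by
      apply strictAntiOn_of_deriv_neg (convex_Ici a) hdy'.continuous.continuousOn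
      intro x hx; rw [interior_Ici] at hx; exact hd2 x hx.le
    have hε : deriv y (a+1) < 0 := by
      have := hstr self_mem_Ici (mem_Ici.mpr (by linarith : a ≤ a+1)) (by linarith)
      linarith
    have hlin : ∀ x, a+1 ≤ x → -(deriv y (a+1)) ≤ deriv (fun s => -(y s)) x := by
      intro x hx
      have he : deriv (fun s => -(y s)) x = -(deriv y x) := deriv.neg
      rw [he]
      rcases eq_or_lt_of_le hx with h|h
      · rw [← h]
      · have := hstr (mem_Ici.mpr (by linarith : a ≤ a+1)) (mem_Ici.mpr (by linarith)) h
        linarith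
    obtain ⟨x, hxm, hxM⟩ := unbounded_of_lin hdy.neg (by linarith) hlin (M+1) m
    have := abs_le.mp (hM x hxm); linarith [show (-y) x = -(y x) from rfl]
  -- no upper tail at -∞
  have noUpper : ∀ a : ℝ, (∀ s, s ≤ a → σp s < y s) → False := by
    intro a hall
    have hyneg : ∀ s, s ≤ a → deriv y s < 0 := fun s hs => U1 s (hall s hs)
    have hv : Differentiable ℝ (fun x => y (-x)) := hdy.comp differentiable_neg
    have hvd : deriv (fun x => y (-x)) = fun x => -(deriv y (-x)) :=
      funext fun x => deriv_comp_neg y x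
    have hv' : Differentiable ℝ (deriv (fun x => y (-x))) := by
      rw [hvd]; exact ((hdy'.comp differentiable_neg)).neg
    have hvdd : ∀ x, deriv (deriv (fun x => y (-x))) x = deriv (deriv y) (-x) := by
      intro x
      rw [hvd]
      have h1 : deriv (fun x => -(deriv y (-x))) x = -(deriv (fun x => deriv y (-x)) x) :=
        deriv.neg
      rw [h1, deriv_comp_neg (deriv y) x]; ring
    have hvmono : MonotoneOn (deriv (fun x => y (-x))) (Ici (-a)) := by
      apply monotoneOn_of_deriv_nonneg (convex_Ici _) hv'.continuous.continuousOn
        hv'.differentiableOn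
      intro x hx; rw [interior_Ici] at hx
      have hsx : -x ≤ a := by simp only [mem_Ioi] at hx; linarith
      rw [hvdd x, hyd2 (-x)]
      have h1 := hall (-x) hsx
      exact ((cubic_sign hα (hσpos (-x)) (hσroot (-x))
        (Or.inl ((hσpos (-x)).le.trans h1.le))).2.mpr h1).le
    have hε0 : 0 < deriv (fun x => y (-x)) (-a+1) := by
      rw [hvd]
      simp only
      have h1 : deriv y (-(-a+1)) < 0 := hyneg (-(-a+1)) (by linarith)
      linarith
    have h2 : ∀ x, -a+1 ≤ x → deriv (fun x => y (-x)) (-a+1) ≤ deriv (fun x => y (-x)) x :=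
      fun x hx => hvmono (mem_Ici.mpr (by linarith)) (mem_Ici.mpr (by linarith)) hx
    have h1' : ∀ x, -a+1 ≤ x → 0 < (fun x => y (-x)) x := by
      intro x hx
      have := hall (-x) (by linarith)
      have := hσpos (-x)
      simp only
      linarith
    have h3 : ∀ x, -a+1 ≤ x → 2*((fun x => y (-x)) x)^3 - x*((fun x => y (-x)) x) - (-α)
        ≤ deriv (deriv (fun x => y (-x))) x := by
      intro x hx
      rw [hvdd x, hyd2 (-x)]
      simp only
      apply le_of_eq; ring
    exact noblow hv hv' hε0 (by linarith : (0:ℝ) ≤ -α) h1' h2 h3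
  -- no lower tail at -∞
  have noLower : ∀ a : ℝ, a ≤ sStar → (∀ s, s ≤ a → y s < σm s) → False := by
    intro a ha hall
    have hypos : ∀ s, s ≤ a → 0 < deriv y s :=
      fun s hs => L1m s (le_trans hs ha) (hall s hs)
    have hv : Differentiable ℝ (fun x => -(y (-x))) := (hdy.comp differentiable_neg).neg
    have hvd : deriv (fun x => -(y (-x))) = fun x => deriv y (-x) := by
      funext x
      have h1 : deriv (fun x => -(y (-x))) x = -(deriv (fun x => y (-x)) x) := deriv.neg
      rw [h1, deriv_comp_neg y x]; ring
    have hv' : Differentiable ℝ (deriv (fun x => -(y (-x)))) := by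
      rw [hvd]; exact hdy'.comp differentiable_neg
    have hvdd : ∀ x, deriv (deriv (fun x => -(y (-x)))) x = -(deriv (deriv y) (-x)) := by
      intro x; rw [hvd, deriv_comp_neg (deriv y) x]
    have hvmono : MonotoneOn (deriv (fun x => -(y (-x)))) (Ici (-a)) := by
      apply monotoneOn_of_deriv_nonneg (convex_Ici _) hv'.continuous.continuousOn
        hv'.differentiableOn
      intro x hx; rw [interior_Ici] at hx
      have hsx : -x ≤ a := by simp only [mem_Ioi] at hx; linarith
      rw [hvdd x, hyd2 (-x)]
      have h1 := hbelow (-x) (le_trans hsx ha) (y (-x)) (hall (-x) hsx)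
      linarith
    have hε0 : 0 < deriv (fun x => -(y (-x))) (-a+1) := by
      rw [hvd]
      simp only
      exact hypos (-(-a+1)) (by linarith)
    have h2 : ∀ x, -a+1 ≤ x →
        deriv (fun x => -(y (-x))) (-a+1) ≤ deriv (fun x => -(y (-x))) x :=
      fun x hx => hvmono (mem_Ici.mpr (by linarith)) (mem_Ici.mpr (by linarith)) hx
    have h1' : ∀ x, -a+1 ≤ x → 0 < (fun x => -(y (-x))) x := by
      intro x hx
      have h4 := hall (-x) (by linarith)
      have h5 := hσmneg (-x) (le_trans (by linarith) ha)
      simp only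
      linarith
    have h3 : ∀ x, -a+1 ≤ x →
        2*((fun x => -(y (-x))) x)^3 - x*((fun x => -(y (-x))) x) - (-α)
        ≤ deriv (deriv (fun x => -(y (-x)))) x := by
      intro x hx
      rw [hvdd x, hyd2 (-x)]
      simp only
      nlinarith []
    exact noblow hv hv' hε0 (by linarith : (0:ℝ) ≤ -α) h1' h2 h3
  -- assemble part 2
  by_cases hBU : ∃ B, ∀ s, s ≤ min sStar B → y s ≤ σp s
  · by_cases hBL : ∃ B', ∀ s, s ≤ min sStar B' → σm s ≤ y s
    · obtain ⟨B, hB⟩ := hBU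
      obtain ⟨B', hB'⟩ := hBL
      refine ⟨min sStar (min B B'), min_le_left _ _, ?_⟩
      intro s hsle
      have h1 : s ≤ min sStar B := by
        simp only [le_min_iff] at hsle ⊢
        exact ⟨hsle.1, hsle.2.1⟩
      have h2 : s ≤ min sStar B' := by
        simp only [le_min_iff] at hsle ⊢
        exact ⟨hsle.1, hsle.2.2⟩
      exact ⟨hB' s h2, hB s h1⟩
    · exfalso
      push_neg at hBL
      -- lower violations unbounded below
      obtain ⟨a₁, ha₁, hv₁⟩ := hBL (sStar - 1)
      have ha₁s : a₁ ≤ sStar - 1 := le_trans ha₁ (min_le_right _ _)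
      have hw₁ : ∃ w, w ≤ a₁ ∧ σm w ≤ y w := by
        by_contra hc; push_neg at hc
        exact noLower a₁ (by linarith) (fun s hs => hc s hs)
      obtain ⟨w₁, hw₁a, hw₁v⟩ := hw₁
      obtain ⟨a₂, ha₂, hv₂⟩ := hBL (w₁ - 1)
      have ha₂w₁ : a₂ < w₁ := by
        have := le_trans ha₂ (min_le_right _ _); linarith
      have ha₂s : a₂ ≤ sStar := le_trans ha₂ (min_le_left _ _)
      have hw₂ : ∃ w, w ≤ a₂ ∧ σm w ≤ y w := by
        by_contra hc; push_neg at hc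
        exact noLower a₂ ha₂s (fun s hs => hc s hs)
      obtain ⟨w₂, hw₂a, hw₂v⟩ := hw₂
      have hw₂a₂ : w₂ < a₂ := lt_of_le_of_ne hw₂a (fun h => by rw [h] at hw₂v; linarith)
      have hiowin : ∀ x, x ∈ Icc w₂ w₁ → x < sStar := by
        intro x hx; have := hx.2; linarith
      have hσmcont : ContinuousOn σm (Iio sStar) :=
        (hmconv.subset (fun x hx => le_of_lt hx) (convex_Iio _)).continuousOn isOpen_Iio
      obtain ⟨c, hcmem, hcle, hcprop⟩ := last_point (f := σm) (g := y) hw₂a₂.le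
        (hσmcont.mono (fun x hx => hiowin x ⟨hx.1, le_trans hx.2 (by linarith)⟩))
        hdy.continuous.continuousOn hw₂v
      obtain ⟨d, hdmem, hdle, hdprop⟩ := first_point (f := σm) (g := y) ha₂w₁.le
        (hσmcont.mono (fun x hx => hiowin x ⟨le_trans hw₂a₂.le hx.1, hx.2⟩))
        hdy.continuous.continuousOn hw₁v
      have hcd : c < a₂ := lt_of_le_of_ne hcmem.2 (fun h => by rw [h] at hcle; linarith)
      have hda : a₂ < d := lt_of_le_of_ne hdmem.1 (fun h => by rw [← h] at hdle; linarith)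
      have hmid : ∀ t, c < t → t < d → y t < σm t := by
        intro t h1' h2'
        rcases le_or_gt t a₂ with h|h
        · exact hcprop t h1' h
        · exact hdprop t h.le h2'
      have hcs : c ≤ sStar := by have := hcmem.2; linarith
      have hds : d ≤ sStar := by have := hdmem.2; linarith
      have hyconc : ConcaveOn ℝ (Icc c d) y := by
        apply concaveOn_of_deriv2_nonpos (convex_Icc c d) hdy.continuous.continuousOn
          hdy.differentiableOn hdy'.differentiableOn
        intro x hx
        rw [interior_Icc] at hx
        have hiter : deriv^[2] y x = deriv (deriv y) x := rfl
        rw [hiter, hyd2 x]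
        exact (hbelow x (by linarith [hx.2]) (y x) (hmid x hx.1 hx.2)).le
      obtain ⟨lam, mu, hl0, hm0, hlm, hxeq⟩ := combo_exists hcd.le hda.le (lt_trans hcd hda)
      have hychord := hyconc.2 (left_mem_Icc.mpr (lt_trans hcd hda).le)
        (right_mem_Icc.mpr (lt_trans hcd hda).le) hl0 hm0 hlm
      have hσchord := hmconv.2 (mem_Iic.mpr hcs) (mem_Iic.mpr hds) hl0 hm0 hlm
      simp only [smul_eq_mul] at hychord hσchord
      rw [← hxeq] at hychord hσchord
      have h5 : lam*(σm c) + mu*(σm d) ≤ lam*(y c) + mu*(y d) :=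
        add_le_add (mul_le_mul_of_nonneg_left hcle hl0) (mul_le_mul_of_nonneg_left hdle hm0)
      linarith
  · exfalso
    push_neg at hBU
    obtain ⟨a₁, ha₁, hv₁⟩ := hBU (sStar - 1)
    have ha₁s : a₁ ≤ sStar - 1 := le_trans ha₁ (min_le_right _ _)
    have hw₁ : ∃ w, w ≤ a₁ ∧ y w ≤ σp w := by
      by_contra hc; push_neg at hc
      exact noUpper a₁ (fun s hs => hc s hs)
    obtain ⟨w₁, hw₁a, hw₁v⟩ := hw₁
    obtain ⟨a₂, ha₂, hv₂⟩ := hBU (w₁ - 1)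
    have ha₂w₁ : a₂ < w₁ := by
      have := le_trans ha₂ (min_le_right _ _); linarith
    have ha₂s : a₂ ≤ sStar := le_trans ha₂ (min_le_left _ _)
    have hw₂ : ∃ w, w ≤ a₂ ∧ y w ≤ σp w := by
      by_contra hc; push_neg at hc
      exact noUpper a₂ (fun s hs => hc s hs)
    obtain ⟨w₂, hw₂a, hw₂v⟩ := hw₂
    have hw₂a₂ : w₂ < a₂ := lt_of_le_of_ne hw₂a (fun h => by rw [h] at hw₂v; linarith)
    have hiowin : ∀ x, x ∈ Icc w₂ w₁ → x < sStar := by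
      intro x hx; have := hx.2; linarith
    have hσpcont : ContinuousOn σp (Iio sStar) :=
      (hconc.subset (fun x hx => le_of_lt hx) (convex_Iio _)).continuousOn isOpen_Iio
    obtain ⟨c, hcmem, hcle, hcprop⟩ := last_point (f := y) (g := σp) hw₂a₂.le
      hdy.continuous.continuousOn
      (hσpcont.mono (fun x hx => hiowin x ⟨hx.1, le_trans hx.2 (by linarith)⟩)) hw₂v
    obtain ⟨d, hdmem, hdle, hdprop⟩ := first_point (f := y) (g := σp) ha₂w₁.le
      hdy.continuous.continuousOn
      (hσpcont.mono (fun x hx => hiowin x ⟨le_trans hw₂a₂.le hx.1, hx.2⟩)) hw₁v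
    have hcd : c < a₂ := lt_of_le_of_ne hcmem.2 (fun h => by rw [h] at hcle; linarith)
    have hda : a₂ < d := lt_of_le_of_ne hdmem.1 (fun h => by rw [← h] at hdle; linarith)
    have hmid : ∀ t, c < t → t < d → σp t < y t := by
      intro t h1' h2'
      rcases le_or_gt t a₂ with h|h
      · exact hcprop t h1' h
      · exact hdprop t h.le h2'
    have hcs : c ≤ sStar := by have := hcmem.2; linarith
    have hds : d ≤ sStar := by have := hdmem.2; linarith
    have hyconv : ConvexOn ℝ (Icc c d) y := by
      apply convexOn_of_deriv2_nonneg (convex_Icc c d) hdy.continuous.continuousOn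
        hdy.differentiableOn hdy'.differentiableOn
      intro x hx
      rw [interior_Icc] at hx
      have hiter : deriv^[2] y x = deriv (deriv y) x := rfl
      rw [hiter, hyd2 x]
      have h1 := hmid x hx.1 hx.2
      exact ((cubic_sign hα (hσpos x) (hσroot x)
        (Or.inl ((hσpos x).le.trans h1.le))).2.mpr h1).le
    obtain ⟨lam, mu, hl0, hm0, hlm, hxeq⟩ := combo_exists hcd.le hda.le (lt_trans hcd hda)
    have hychord := hyconv.2 (left_mem_Icc.mpr (lt_trans hcd hda).le)
      (right_mem_Icc.mpr (lt_trans hcd hda).le) hl0 hm0 hlm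
    have hσchord := hconc.2 (mem_Iic.mpr hcs) (mem_Iic.mpr hds) hl0 hm0 hlm
    simp only [smul_eq_mul] at hychord hσchord
    rw [← hxeq] at hychord hσchord
    have h5 : lam*(y c) + mu*(y d) ≤ lam*(σp c) + mu*(σp d) :=
      add_le_add (mul_le_mul_of_nonneg_left hcle hl0) (mul_le_mul_of_nonneg_left hdle hm0)
    linarith
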